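/- arXiv:2205.00653 — 2 statements merged into one kernel-verified Lean document; each statement's English description precedes it below -/
import Mathlib

section
/- For every μ ∈ [0,1] and every integer L ≥ 1, the trace of the L-th power of the S=2 transfer matrix satisfies Tr[T(μ)^L] = λ₁(μ)^L + λ₂(μ)^L + λ₃(μ)^L + 2·λ₄(μ)^L + 2·λ₅(μ)^L + 2·λ₆(μ)^L. (This trace equals the squared norm ⟨Ψ_μ|Ψ_μ⟩ of the S=2 asymmetric VBS state on the periodic chain of L sites.) -/
open Matrix Kronecker

/-- The matrix `A⁽²⁾` of the S=2 asymmetric VBS state. -/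
noncomputable def A2 (μ : ℝ) : Matrix (Fin 3) (Fin 3) ℝ :=
  !![0, 0, 0; 0, 0, 0; -μ, 0, 0]

/-- The matrix `A⁽¹⁾` of the S=2 asymmetric VBS state (`κ = √(μ(1+μ²))`). -/
noncomputable def A1 (μ : ℝ) : Matrix (Fin 3) (Fin 3) ℝ :=
  (1 / 2 : ℝ) • !![0, 0, 0;
    Real.sqrt (μ * (1 + μ ^ 2)), 0, 0;
    0, -Real.sqrt (μ * (1 + μ ^ 2)), 0]

/-- The matrix `A⁽⁰⁾` of the S=2 asymmetric VBS state. -/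
noncomputable def A0 (μ : ℝ) : Matrix (Fin 3) (Fin 3) ℝ :=
  (1 / Real.sqrt 6) • !![-μ, 0, 0; 0, 1 + μ ^ 2, 0; 0, 0, -μ]

/-- The matrix `A⁽⁻¹⁾` of the S=2 asymmetric VBS state (`κ = √(μ(1+μ²))`). -/
noncomputable def Am1 (μ : ℝ) : Matrix (Fin 3) (Fin 3) ℝ :=
  (1 / 2 : ℝ) • !![0, -Real.sqrt (μ * (1 + μ ^ 2)), 0;
    0, 0, Real.sqrt (μ * (1 + μ ^ 2));
    0, 0, 0]

/-- The matrix `A⁽⁻²⁾` of the S=2 asymmetric VBS state. -/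
noncomputable def Am2 (μ : ℝ) : Matrix (Fin 3) (Fin 3) ℝ :=
  !![0, 0, -μ; 0, 0, 0; 0, 0, 0]

/-- The transfer matrix `T(μ)` of the S=2 asymmetric VBS state. -/
noncomputable def T (μ : ℝ) : Matrix (Fin 3 × Fin 3) (Fin 3 × Fin 3) ℝ :=
  A2 μ ⊗ₖ A2 μ + A1 μ ⊗ₖ A1 μ + A0 μ ⊗ₖ A0 μ + Am1 μ ⊗ₖ Am1 μ + Am2 μ ⊗ₖ Am2 μ

/-- The eigenvalue `λ₁(μ)`. -/
noncomputable def lam1 (μ : ℝ) : ℝ :=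
  (1 + 9 * μ ^ 2 + μ ^ 4 +
    Real.sqrt (1 + 8 * μ ^ 2 + 63 * μ ^ 4 + 8 * μ ^ 6 + μ ^ 8)) / 12

/-- The eigenvalue `λ₂(μ)`. -/
noncomputable def lam2 (μ : ℝ) : ℝ :=
  (1 + 9 * μ ^ 2 + μ ^ 4 -
    Real.sqrt (1 + 8 * μ ^ 2 + 63 * μ ^ 4 + 8 * μ ^ 6 + μ ^ 8)) / 12

/-- The eigenvalue `λ₃(μ)`. -/
noncomputable def lam3 (μ : ℝ) : ℝ := -5 * μ ^ 2 / 6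

/-- The eigenvalue `λ₄(μ)`. -/
noncomputable def lam4 (μ : ℝ) : ℝ := μ * (1 + μ ^ 2) / 12

/-- The eigenvalue `λ₅(μ)`. -/
noncomputable def lam5 (μ : ℝ) : ℝ := -5 * μ * (1 + μ ^ 2) / 12

/-- The eigenvalue `λ₆(μ)`. -/
noncomputable def lam6 (μ : ℝ) : ℝ := μ ^ 2 / 6

section AuxVBS

@[simp] lemma cv_2_1 {α : Type*} (x : α) (u : Fin 1 → α) : Matrix.vecCons x u (1 : Fin 2) = u 0 := rfl
@[simp] lemma cv_3_1 {α : Type*} (x : α) (u : Fin 2 → α) : Matrix.vecCons x u (1 : Fin 3) = u 0 := rfl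
@[simp] lemma cv_3_2 {α : Type*} (x : α) (u : Fin 2 → α) : Matrix.vecCons x u (2 : Fin 3) = u 1 := rfl
@[simp] lemma cv_4_1 {α : Type*} (x : α) (u : Fin 3 → α) : Matrix.vecCons x u (1 : Fin 4) = u 0 := rfl
@[simp] lemma cv_4_2 {α : Type*} (x : α) (u : Fin 3 → α) : Matrix.vecCons x u (2 : Fin 4) = u 1 := rfl
@[simp] lemma cv_4_3 {α : Type*} (x : α) (u : Fin 3 → α) : Matrix.vecCons x u (3 : Fin 4) = u 2 := rfl
@[simp] lemma cv_5_1 {α : Type*} (x : α) (u : Fin 4 → α) : Matrix.vecCons x u (1 : Fin 5) = u 0 := rfl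
@[simp] lemma cv_5_2 {α : Type*} (x : α) (u : Fin 4 → α) : Matrix.vecCons x u (2 : Fin 5) = u 1 := rfl
@[simp] lemma cv_5_3 {α : Type*} (x : α) (u : Fin 4 → α) : Matrix.vecCons x u (3 : Fin 5) = u 2 := rfl
@[simp] lemma cv_5_4 {α : Type*} (x : α) (u : Fin 4 → α) : Matrix.vecCons x u (4 : Fin 5) = u 3 := rfl
@[simp] lemma cv_6_1 {α : Type*} (x : α) (u : Fin 5 → α) : Matrix.vecCons x u (1 : Fin 6) = u 0 := rfl
@[simp] lemma cv_6_2 {α : Type*} (x : α) (u : Fin 5 → α) : Matrix.vecCons x u (2 : Fin 6) = u 1 := rfl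
@[simp] lemma cv_6_3 {α : Type*} (x : α) (u : Fin 5 → α) : Matrix.vecCons x u (3 : Fin 6) = u 2 := rfl
@[simp] lemma cv_6_4 {α : Type*} (x : α) (u : Fin 5 → α) : Matrix.vecCons x u (4 : Fin 6) = u 3 := rfl
@[simp] lemma cv_6_5 {α : Type*} (x : α) (u : Fin 5 → α) : Matrix.vecCons x u (5 : Fin 6) = u 4 := rfl
@[simp] lemma cv_7_1 {α : Type*} (x : α) (u : Fin 6 → α) : Matrix.vecCons x u (1 : Fin 7) = u 0 := rfl
@[simp] lemma cv_7_2 {α : Type*} (x : α) (u : Fin 6 → α) : Matrix.vecCons x u (2 : Fin 7) = u 1 := rfl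
@[simp] lemma cv_7_3 {α : Type*} (x : α) (u : Fin 6 → α) : Matrix.vecCons x u (3 : Fin 7) = u 2 := rfl
@[simp] lemma cv_7_4 {α : Type*} (x : α) (u : Fin 6 → α) : Matrix.vecCons x u (4 : Fin 7) = u 3 := rfl
@[simp] lemma cv_7_5 {α : Type*} (x : α) (u : Fin 6 → α) : Matrix.vecCons x u (5 : Fin 7) = u 4 := rfl
@[simp] lemma cv_7_6 {α : Type*} (x : α) (u : Fin 6 → α) : Matrix.vecCons x u (6 : Fin 7) = u 5 := rfl
@[simp] lemma cv_8_1 {α : Type*} (x : α) (u : Fin 7 → α) : Matrix.vecCons x u (1 : Fin 8) = u 0 := rfl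
@[simp] lemma cv_8_2 {α : Type*} (x : α) (u : Fin 7 → α) : Matrix.vecCons x u (2 : Fin 8) = u 1 := rfl
@[simp] lemma cv_8_3 {α : Type*} (x : α) (u : Fin 7 → α) : Matrix.vecCons x u (3 : Fin 8) = u 2 := rfl
@[simp] lemma cv_8_4 {α : Type*} (x : α) (u : Fin 7 → α) : Matrix.vecCons x u (4 : Fin 8) = u 3 := rfl
@[simp] lemma cv_8_5 {α : Type*} (x : α) (u : Fin 7 → α) : Matrix.vecCons x u (5 : Fin 8) = u 4 := rfl
@[simp] lemma cv_8_6 {α : Type*} (x : α) (u : Fin 7 → α) : Matrix.vecCons x u (6 : Fin 8) = u 5 := rfl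
@[simp] lemma cv_8_7 {α : Type*} (x : α) (u : Fin 7 → α) : Matrix.vecCons x u (7 : Fin 8) = u 6 := rfl
@[simp] lemma cv_9_1 {α : Type*} (x : α) (u : Fin 8 → α) : Matrix.vecCons x u (1 : Fin 9) = u 0 := rfl
@[simp] lemma cv_9_2 {α : Type*} (x : α) (u : Fin 8 → α) : Matrix.vecCons x u (2 : Fin 9) = u 1 := rfl
@[simp] lemma cv_9_3 {α : Type*} (x : α) (u : Fin 8 → α) : Matrix.vecCons x u (3 : Fin 9) = u 2 := rfl
@[simp] lemma cv_9_4 {α : Type*} (x : α) (u : Fin 8 → α) : Matrix.vecCons x u (4 : Fin 9) = u 3 := rfl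
@[simp] lemma cv_9_5 {α : Type*} (x : α) (u : Fin 8 → α) : Matrix.vecCons x u (5 : Fin 9) = u 4 := rfl
@[simp] lemma cv_9_6 {α : Type*} (x : α) (u : Fin 8 → α) : Matrix.vecCons x u (6 : Fin 9) = u 5 := rfl
@[simp] lemma cv_9_7 {α : Type*} (x : α) (u : Fin 8 → α) : Matrix.vecCons x u (7 : Fin 9) = u 6 := rfl
@[simp] lemma cv_9_8 {α : Type*} (x : α) (u : Fin 8 → α) : Matrix.vecCons x u (8 : Fin 9) = u 7 := rfl
@[simp] lemma mk_2_0 (h : 0 < 2) : (⟨0, h⟩ : Fin 2) = (0 : Fin 2) := rfl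
@[simp] lemma mk_2_1 (h : 1 < 2) : (⟨1, h⟩ : Fin 2) = (1 : Fin 2) := rfl
@[simp] lemma mk_3_0 (h : 0 < 3) : (⟨0, h⟩ : Fin 3) = (0 : Fin 3) := rfl
@[simp] lemma mk_3_1 (h : 1 < 3) : (⟨1, h⟩ : Fin 3) = (1 : Fin 3) := rfl
@[simp] lemma mk_3_2 (h : 2 < 3) : (⟨2, h⟩ : Fin 3) = (2 : Fin 3) := rfl
@[simp] lemma mk_9_0 (h : 0 < 9) : (⟨0, h⟩ : Fin 9) = (0 : Fin 9) := rfl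
@[simp] lemma mk_9_1 (h : 1 < 9) : (⟨1, h⟩ : Fin 9) = (1 : Fin 9) := rfl
@[simp] lemma mk_9_2 (h : 2 < 9) : (⟨2, h⟩ : Fin 9) = (2 : Fin 9) := rfl
@[simp] lemma mk_9_3 (h : 3 < 9) : (⟨3, h⟩ : Fin 9) = (3 : Fin 9) := rfl
@[simp] lemma mk_9_4 (h : 4 < 9) : (⟨4, h⟩ : Fin 9) = (4 : Fin 9) := rfl
@[simp] lemma mk_9_5 (h : 5 < 9) : (⟨5, h⟩ : Fin 9) = (5 : Fin 9) := rfl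
@[simp] lemma mk_9_6 (h : 6 < 9) : (⟨6, h⟩ : Fin 9) = (6 : Fin 9) := rfl
@[simp] lemma mk_9_7 (h : 7 < 9) : (⟨7, h⟩ : Fin 9) = (7 : Fin 9) := rfl
@[simp] lemma mk_9_8 (h : 8 < 9) : (⟨8, h⟩ : Fin 9) = (8 : Fin 9) := rfl
@[simp] lemma v_2_0 : ((0 : Fin 2) : ℕ) = 0 := rfl
@[simp] lemma v_2_1 : ((1 : Fin 2) : ℕ) = 1 := rfl
@[simp] lemma v_3_0 : ((0 : Fin 3) : ℕ) = 0 := rfl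
@[simp] lemma v_3_1 : ((1 : Fin 3) : ℕ) = 1 := rfl
@[simp] lemma v_3_2 : ((2 : Fin 3) : ℕ) = 2 := rfl
@[simp] lemma v_9_0 : ((0 : Fin 9) : ℕ) = 0 := rfl
@[simp] lemma v_9_1 : ((1 : Fin 9) : ℕ) = 1 := rfl
@[simp] lemma v_9_2 : ((2 : Fin 9) : ℕ) = 2 := rfl
@[simp] lemma v_9_3 : ((3 : Fin 9) : ℕ) = 3 := rfl
@[simp] lemma v_9_4 : ((4 : Fin 9) : ℕ) = 4 := rfl
@[simp] lemma v_9_5 : ((5 : Fin 9) : ℕ) = 5 := rfl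
@[simp] lemma v_9_6 : ((6 : Fin 9) : ℕ) = 6 := rfl
@[simp] lemma v_9_7 : ((7 : Fin 9) : ℕ) = 7 := rfl
@[simp] lemma v_9_8 : ((8 : Fin 9) : ℕ) = 8 := rfl

/-- Transfer matrix in `Fin 9` coordinates. -/
noncomputable def Tm (μ : ℝ) : Matrix (Fin 9) (Fin 9) ℝ :=
  !![μ^2/6, 0, 0, 0, μ*(1+μ^2)/4, 0, 0, 0, μ^2;
     0, -(μ*(1+μ^2))/6, 0, 0, 0, -(μ*(1+μ^2))/4, 0, 0, 0;
     0, 0, μ^2/6, 0, 0, 0, 0, 0, 0;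
     0, 0, 0, -(μ*(1+μ^2))/6, 0, 0, 0, -(μ*(1+μ^2))/4, 0;
     μ*(1+μ^2)/4, 0, 0, 0, (1+μ^2)^2/6, 0, 0, 0, μ*(1+μ^2)/4;
     0, -(μ*(1+μ^2))/4, 0, 0, 0, -(μ*(1+μ^2))/6, 0, 0, 0;
     0, 0, 0, 0, 0, 0, μ^2/6, 0, 0;
     0, 0, 0, -(μ*(1+μ^2))/4, 0, 0, 0, -(μ*(1+μ^2))/6, 0;
     μ^2, 0, 0, 0, μ*(1+μ^2)/4, 0, 0, 0, μ^2/6]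

noncomputable def Pm : Matrix (Fin 9) (Fin 9) ℝ :=
  !![1,0,1,0,0,0,0,0,0;
     0,0,0,1,1,0,0,0,0;
     0,0,0,0,0,0,0,1,0;
     0,0,0,0,0,1,1,0,0;
     0,1,0,0,0,0,0,0,0;
     0,0,0,1,-1,0,0,0,0;
     0,0,0,0,0,0,0,0,1;
     0,0,0,0,0,1,-1,0,0;
     1,0,-1,0,0,0,0,0,0]

noncomputable def Pminv : Matrix (Fin 9) (Fin 9) ℝ :=
  !![1/2,0,0,0,0,0,0,0,1/2;
     0,0,0,0,1,0,0,0,0;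
     1/2,0,0,0,0,0,0,0,-1/2;
     0,1/2,0,0,0,1/2,0,0,0;
     0,1/2,0,0,0,-1/2,0,0,0;
     0,0,0,1/2,0,0,0,1/2,0;
     0,0,0,1/2,0,0,0,-1/2,0;
     0,0,1,0,0,0,0,0,0;
     0,0,0,0,0,0,1,0,0]

/-- Shape of the block-diagonalized transfer matrix. -/
noncomputable def Dsh (a b c d e f g h i j k : ℝ) : Matrix (Fin 9) (Fin 9) ℝ :=
  !![a,b,0,0,0,0,0,0,0;
     c,d,0,0,0,0,0,0,0;
     0,0,e,0,0,0,0,0,0;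
     0,0,0,f,0,0,0,0,0;
     0,0,0,0,g,0,0,0,0;
     0,0,0,0,0,h,0,0,0;
     0,0,0,0,0,0,i,0,0;
     0,0,0,0,0,0,0,j,0;
     0,0,0,0,0,0,0,0,k]

/-- The 2×2 block carrying `λ₁, λ₂`. -/
noncomputable def M2 (μ : ℝ) : Matrix (Fin 2) (Fin 2) ℝ :=
  !![7*μ^2/6, μ*(1+μ^2)/4; 2*(μ*(1+μ^2)/4), (1+μ^2)^2/6]

noncomputable def Dm (μ : ℝ) : Matrix (Fin 9) (Fin 9) ℝ :=
  Dsh (7*μ^2/6) (μ*(1+μ^2)/4) (2*(μ*(1+μ^2)/4)) ((1+μ^2)^2/6)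
    (lam3 μ) (lam5 μ) (lam4 μ) (lam5 μ) (lam4 μ) (lam6 μ) (lam6 μ)

def bEquiv : Fin 9 ≃ Fin 3 × Fin 3 where
  toFun := ![(0,0),(0,1),(0,2),(1,0),(1,1),(1,2),(2,0),(2,1),(2,2)]
  invFun := fun p => ![![0,1,2],![3,4,5],![6,7,8]] p.1 p.2
  left_inv := by decide
  right_inv := by decide

set_option maxHeartbeats 3200000 in
lemma T_eq_reindex (μ : ℝ) (hμ : 0 ≤ μ) :
    T μ = Matrix.reindexAlgEquiv ℝ ℝ bEquiv (Tm μ) := by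
  have hs : Real.sqrt (μ * (1 + μ ^ 2)) * Real.sqrt (μ * (1 + μ ^ 2)) = μ * (1 + μ ^ 2) :=
    Real.mul_self_sqrt (by positivity)
  have h6 : (1 / Real.sqrt 6 : ℝ) * (1 / Real.sqrt 6) = 1 / 6 := by
    rw [div_mul_div_comm, Real.mul_self_sqrt (by norm_num)]; norm_num
  set s := Real.sqrt (μ * (1 + μ ^ 2)) with hsdef
  have hA1 : A1 μ ⊗ₖ A1 μ = (μ * (1 + μ ^ 2) / 4) •
      (!![0,0,0;1,0,0;0,-1,0] ⊗ₖ !![(0:ℝ),0,0;1,0,0;0,-1,0]) := by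
    have : A1 μ = (s / 2) • !![(0:ℝ),0,0;1,0,0;0,-1,0] := by
      unfold A1; ext i j; fin_cases i <;> fin_cases j <;>
        simp [Matrix.vecHead, Matrix.vecTail] <;> ring
    rw [this, smul_kronecker, kronecker_smul, smul_smul]
    congr 1
    rw [div_mul_div_comm, hs]
    norm_num
  have hAm1 : Am1 μ ⊗ₖ Am1 μ = (μ * (1 + μ ^ 2) / 4) •
      (!![0,-1,0;0,0,1;0,0,0] ⊗ₖ !![(0:ℝ),-1,0;0,0,1;0,0,0]) := by
    have : Am1 μ = (s / 2) • !![(0:ℝ),-1,0;0,0,1;0,0,0] := by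
      unfold Am1; ext i j; fin_cases i <;> fin_cases j <;>
        simp [Matrix.vecHead, Matrix.vecTail] <;> ring
    rw [this, smul_kronecker, kronecker_smul, smul_smul]
    congr 1
    rw [div_mul_div_comm, hs]
    norm_num
  have hA0 : A0 μ ⊗ₖ A0 μ = (1/6 : ℝ) •
      (!![-μ,0,0;0,1+μ^2,0;0,0,-μ] ⊗ₖ !![-μ,0,0;0,1+μ^2,0;0,0,-μ]) := by
    unfold A0
    rw [smul_kronecker, kronecker_smul, smul_smul, h6]
  unfold T
  rw [hA1, hAm1, hA0]
  ext p q
  obtain ⟨i, j⟩ := p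
  obtain ⟨k, l⟩ := q
  fin_cases i <;> fin_cases j <;> fin_cases k <;> fin_cases l <;>
    norm_num [A2, Am2, Tm, bEquiv, kroneckerMap_apply, Matrix.vecHead, Matrix.vecTail] <;> ring

set_option maxHeartbeats 3200000 in
lemma hPP : Pm * Pminv = 1 := by
  ext i j
  fin_cases i <;> fin_cases j <;>
    norm_num [Pm, Pminv, Matrix.mul_apply, Fin.sum_univ_succ, Matrix.one_apply, Fin.ext_iff]

set_option maxHeartbeats 3200000 in
lemma hPP' : Pminv * Pm = 1 := by
  ext i j
  fin_cases i <;> fin_cases j <;>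
    norm_num [Pm, Pminv, Matrix.mul_apply, Fin.sum_univ_succ, Matrix.one_apply, Fin.ext_iff]

set_option maxHeartbeats 3200000 in
lemma hTP (μ : ℝ) : Tm μ * Pm = Pm * Dm μ := by
  ext i j
  fin_cases i <;> fin_cases j <;>
    norm_num [Tm, Pm, Dm, Dsh, lam3, lam4, lam5, lam6, Matrix.mul_apply,
      Fin.sum_univ_succ] <;> ring

set_option maxHeartbeats 3200000 in
lemma Dsh_mul (a b c d e f g h i j k a' b' c' d' e' f' g' h' i' j' k' : ℝ) :
    Dsh a b c d e f g h i j k * Dsh a' b' c' d' e' f' g' h' i' j' k' =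
      Dsh (a*a'+b*c') (a*b'+b*d') (c*a'+d*c') (c*b'+d*d')
        (e*e') (f*f') (g*g') (h*h') (i*i') (j*j') (k*k') := by
  ext x y
  fin_cases x <;> fin_cases y <;>
    norm_num [Dsh, Matrix.mul_apply, Fin.sum_univ_succ, Matrix.vecHead, Matrix.vecTail] <;> ring

set_option maxHeartbeats 800000 in
lemma Dsh_one : Dsh 1 0 0 1 1 1 1 1 1 1 1 = 1 := by
  ext x y
  fin_cases x <;> fin_cases y <;>
    norm_num [Dsh, Matrix.one_apply, Fin.ext_iff, Matrix.vecHead, Matrix.vecTail]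

lemma Dsh_trace (a b c d e f g h i j k : ℝ) :
    (Dsh a b c d e f g h i j k).trace = a + d + e + f + g + h + i + j + k := by
  simp [Dsh, Matrix.trace, Matrix.diag, Fin.sum_univ_succ]
  ring

lemma Dm_pow (μ : ℝ) : ∀ L : ℕ, Dm μ ^ L =
    Dsh ((M2 μ ^ L) 0 0) ((M2 μ ^ L) 0 1) ((M2 μ ^ L) 1 0) ((M2 μ ^ L) 1 1)
      (lam3 μ ^ L) (lam5 μ ^ L) (lam4 μ ^ L) (lam5 μ ^ L) (lam4 μ ^ L)
      (lam6 μ ^ L) (lam6 μ ^ L) := by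
  intro L
  induction L with
  | zero =>
    simp only [pow_zero, Matrix.one_apply, Fin.ext_iff]
    norm_num [Dsh_one]
  | succ L ih =>
    rw [pow_succ, ih]
    show _ * Dsh _ _ _ _ _ _ _ _ _ _ _ = _
    rw [Dsh_mul]
    congr 1 <;>
      simp [pow_succ, Matrix.mul_apply, Fin.sum_univ_succ, M2] <;> ring

lemma M2_trace (μ : ℝ) : ∀ L : ℕ, (M2 μ ^ L).trace = lam1 μ ^ L + lam2 μ ^ L := by
  have hD : Real.sqrt (1 + 8*μ^2 + 63*μ^4 + 8*μ^6 + μ^8) ^ 2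
      = 1 + 8*μ^2 + 63*μ^4 + 8*μ^6 + μ^8 :=
    Real.sq_sqrt (by positivity)
  have h1 : lam1 μ + lam2 μ = (1 + 9*μ^2 + μ^4)/6 := by
    unfold lam1 lam2; ring
  have h2 : lam1 μ * lam2 μ = 5*μ^2*(1+μ^2)^2/72 := by
    unfold lam1 lam2
    have : (1 + 9 * μ ^ 2 + μ ^ 4 + Real.sqrt (1 + 8 * μ ^ 2 + 63 * μ ^ 4 + 8 * μ ^ 6 + μ ^ 8)) / 12 *
        ((1 + 9 * μ ^ 2 + μ ^ 4 - Real.sqrt (1 + 8 * μ ^ 2 + 63 * μ ^ 4 + 8 * μ ^ 6 + μ ^ 8)) / 12)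
        = ((1 + 9*μ^2 + μ^4)^2 - Real.sqrt (1 + 8*μ^2 + 63*μ^4 + 8*μ^6 + μ^8)^2) / 144 := by
      ring
    rw [this, hD]
    ring
  have hCH : M2 μ * M2 μ = ((1 + 9*μ^2 + μ^4)/6) • M2 μ - (5*μ^2*(1+μ^2)^2/72) • 1 := by
    ext i j
    fin_cases i <;> fin_cases j <;>
      norm_num [M2, Matrix.mul_apply, Fin.sum_univ_succ, Matrix.one_apply,
        Matrix.smul_apply, Matrix.sub_apply, Fin.ext_iff] <;> ring
  have key : ∀ L : ℕ, M2 μ ^ (L + 2)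
      = ((1 + 9*μ^2 + μ^4)/6) • M2 μ ^ (L + 1) - (5*μ^2*(1+μ^2)^2/72) • M2 μ ^ L := by
    intro L
    calc M2 μ ^ (L+2) = M2 μ ^ L * (M2 μ * M2 μ) := by
          rw [pow_succ, pow_succ, mul_assoc]
      _ = M2 μ ^ L * (((1 + 9*μ^2 + μ^4)/6) • M2 μ - (5*μ^2*(1+μ^2)^2/72) • 1) := by rw [hCH]
      _ = ((1 + 9*μ^2 + μ^4)/6) • (M2 μ ^ L * M2 μ)
            - (5*μ^2*(1+μ^2)^2/72) • (M2 μ ^ L * 1) := by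
          rw [Matrix.mul_sub, Matrix.mul_smul, Matrix.mul_smul]
      _ = _ := by rw [mul_one, ← pow_succ]
  have main : ∀ L : ℕ, (M2 μ ^ L).trace = lam1 μ ^ L + lam2 μ ^ L ∧
      (M2 μ ^ (L+1)).trace = lam1 μ ^ (L+1) + lam2 μ ^ (L+1) := by
    intro L
    induction L with
    | zero =>
      constructor
      · norm_num [Matrix.trace_one]
      · rw [pow_one, pow_one, pow_one, Matrix.trace_fin_two, h1]
        norm_num [M2]
        ring
    | succ L ih =>
      refine ⟨ih.2, ?_⟩
      calc (M2 μ ^ (L+1+1)).trace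
          = ((1 + 9*μ^2 + μ^4)/6) * (M2 μ ^ (L+1)).trace
            - (5*μ^2*(1+μ^2)^2/72) * (M2 μ ^ L).trace := by
            rw [key L, Matrix.trace_sub, Matrix.trace_smul, Matrix.trace_smul,
              smul_eq_mul, smul_eq_mul]
        _ = (lam1 μ + lam2 μ) * (lam1 μ ^ (L+1) + lam2 μ ^ (L+1))
            - (lam1 μ * lam2 μ) * (lam1 μ ^ L + lam2 μ ^ L) := by
            rw [ih.1, ih.2, h1, h2]
        _ = lam1 μ ^ (L+1+1) + lam2 μ ^ (L+1+1) := by ring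
  exact fun L => (main L).1

lemma hTm_conj (μ : ℝ) : Tm μ = Pm * Dm μ * Pminv := by
  calc Tm μ = Tm μ * (Pm * Pminv) := by rw [hPP, mul_one]
    _ = Tm μ * Pm * Pminv := by rw [mul_assoc]
    _ = Pm * Dm μ * Pminv := by rw [hTP]

lemma hTm_pow (μ : ℝ) : ∀ L : ℕ, Tm μ ^ L = Pm * Dm μ ^ L * Pminv := by
  intro L
  induction L with
  | zero => rw [pow_zero, pow_zero, mul_one, hPP]
  | succ L ih =>
    rw [pow_succ, ih, hTm_conj, pow_succ]
    rw [Matrix.mul_assoc (Pm * Dm μ ^ L) Pminv _]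
    rw [show Pminv * (Pm * Dm μ * Pminv) = Dm μ * Pminv from by
      rw [← Matrix.mul_assoc, ← Matrix.mul_assoc, hPP', Matrix.one_mul]]
    simp only [Matrix.mul_assoc]

lemma trace_reindex9 (M : Matrix (Fin 9) (Fin 9) ℝ) :
    (Matrix.reindexAlgEquiv ℝ ℝ bEquiv M).trace = M.trace := by
  rw [Matrix.reindexAlgEquiv_apply, Matrix.reindex_apply]
  simp only [Matrix.trace, Matrix.diag, Matrix.submatrix_apply]
  exact Fintype.sum_equiv bEquiv.symm _ _ (fun x => rfl)

end AuxVBS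

/-- For every `μ ∈ [0,1]` and every `L ≥ 1`, the squared norm `⟨Ψ_μ|Ψ_μ⟩` of the S=2
asymmetric VBS state on the periodic chain of `L` sites is
`Tr[T(μ)^L] = λ₁^L + λ₂^L + λ₃^L + 2λ₄^L + 2λ₅^L + 2λ₆^L`. -/
theorem trace_power_transfer_S2 (μ : ℝ) (hμ : μ ∈ Set.Icc (0 : ℝ) 1)
    (L : ℕ) (hL : 1 ≤ L) :
    (T μ ^ L).trace =
      lam1 μ ^ L + lam2 μ ^ L + lam3 μ ^ L +
        2 * lam4 μ ^ L + 2 * lam5 μ ^ L + 2 * lam6 μ ^ L := by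
  have h2 := M2_trace μ L
  rw [Matrix.trace_fin_two] at h2
  calc (T μ ^ L).trace
      = ((Matrix.reindexAlgEquiv ℝ ℝ bEquiv) (Tm μ ^ L)).trace := by
        rw [T_eq_reindex μ hμ.1, ← map_pow]
    _ = (Tm μ ^ L).trace := trace_reindex9 _
    _ = (Pm * Dm μ ^ L * Pminv).trace := by rw [hTm_pow]
    _ = (Dm μ ^ L).trace := by rw [Matrix.trace_mul_cycle, hPP', Matrix.one_mul]
    _ = _ := by
        rw [Dm_pow, Dsh_trace]
        linarith [h2]
end

section
/- For every μ ∈ [0,1], the eigenvalues of the S=2 transfer matrix satisfy λ₁(μ) > 0 and |λ_j(μ)| < λ₁(μ) for every j ∈ {2, 3, 4, 5, 6}; moreover |λ_j(μ)| ≤ |λ₅(μ)| for j ∈ {2, 3, 4, 6}. In particular λ₁(μ) is the nondegenerate largest-modulus eigenvalue (Perron eigenvalue) of T(μ), uniformly for μ ∈ [0,1]. -/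
open Matrix Kronecker

set_option maxHeartbeats 1600000 in
/-- For every `μ ∈ [0,1]`: `λ₁(μ) > 0`, `|λ_j(μ)| < λ₁(μ)` for `j ∈ {2,3,4,5,6}`, and
`|λ_j(μ)| ≤ |λ₅(μ)|` for `j ∈ {2,3,4,6}`; so `λ₁(μ)` is the nondegenerate
largest-modulus (Perron) eigenvalue of the S=2 transfer matrix, uniformly on `[0,1]`. -/
theorem perron_eigenvalue_S2 (μ : ℝ) (hμ : μ ∈ Set.Icc (0 : ℝ) 1) :
    lam1 μ > 0 ∧
      |lam2 μ| < lam1 μ ∧ |lam3 μ| < lam1 μ ∧ |lam4 μ| < lam1 μ ∧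
      |lam5 μ| < lam1 μ ∧ |lam6 μ| < lam1 μ ∧
      |lam2 μ| ≤ |lam5 μ| ∧ |lam3 μ| ≤ |lam5 μ| ∧ |lam4 μ| ≤ |lam5 μ| ∧
      |lam6 μ| ≤ |lam5 μ| := by
  obtain ⟨h0, h1⟩ := hμ
  have h1p : (0:ℝ) ≤ 1 + μ ^ 2 := by positivity
  have hsnn : 0 ≤ Real.sqrt (1 + 8 * μ ^ 2 + 63 * μ ^ 4 + 8 * μ ^ 6 + μ ^ 8) :=
    Real.sqrt_nonneg _
  have hs1 : 1 ≤ Real.sqrt (1 + 8 * μ ^ 2 + 63 * μ ^ 4 + 8 * μ ^ 6 + μ ^ 8) := by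
    have h := Real.sqrt_le_sqrt (show (1:ℝ) ≤ 1 + 8 * μ ^ 2 + 63 * μ ^ 4 + 8 * μ ^ 6 + μ ^ 8 by
      nlinarith [sq_nonneg μ, sq_nonneg (μ^2), sq_nonneg (μ^3), sq_nonneg (μ^4)])
    rwa [Real.sqrt_one] at h
  have hg0 : 0 < 1 + 9*μ^2 + μ^4 - 5*μ - 5*μ^3 := by
    nlinarith [sq_nonneg (μ^2 - 5/2*μ + 1), sq_nonneg μ, mul_nonneg h0 (sub_nonneg.2 h1),
      sq_nonneg (μ - 1/2), sq_nonneg (μ*(1-μ)), mul_nonneg (mul_nonneg h0 h0) (sub_nonneg.2 h1)]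
  have hq : 0 ≤ 2 + 18*μ^2 + 2*μ^4 - 7*μ - 7*μ^3 := by
    nlinarith [sq_nonneg (μ^2 - 7/4*μ + 1), sq_nonneg μ]
  have hsg : 1 + 9*μ^2 + μ^4 - 5*μ - 5*μ^3 ≤
      Real.sqrt (1 + 8 * μ ^ 2 + 63 * μ ^ 4 + 8 * μ ^ 6 + μ ^ 8) := by
    have hgD : (1 + 9*μ^2 + μ^4 - 5*μ - 5*μ^3) ^ 2 ≤
        1 + 8 * μ ^ 2 + 63 * μ ^ 4 + 8 * μ ^ 6 + μ ^ 8 := by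
      nlinarith [mul_nonneg (mul_nonneg h0 h1p) hq]
    have := Real.sqrt_le_sqrt hgD
    rwa [Real.sqrt_sq hg0.le] at this
  have hsP : Real.sqrt (1 + 8 * μ ^ 2 + 63 * μ ^ 4 + 8 * μ ^ 6 + μ ^ 8) ≤ 1 + 9*μ^2 + μ^4 := by
    have hDP : 1 + 8 * μ ^ 2 + 63 * μ ^ 4 + 8 * μ ^ 6 + μ ^ 8 ≤ (1 + 9*μ^2 + μ^4) ^ 2 := by
      nlinarith [sq_nonneg (μ * (1 + μ^2))]
    have := Real.sqrt_le_sqrt hDP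
    rwa [Real.sqrt_sq (by positivity)] at this
  have ha2 : |lam2 μ| = lam2 μ := abs_of_nonneg (by rw [lam2]; linarith)
  have ha3 : |lam3 μ| = 5 * μ ^ 2 / 6 := by
    rw [lam3, abs_of_nonpos (by nlinarith [sq_nonneg μ])]; ring
  have ha4 : |lam4 μ| = μ * (1 + μ ^ 2) / 12 := by
    rw [lam4, abs_of_nonneg (by positivity)]
  have ha5 : |lam5 μ| = 5 * μ * (1 + μ ^ 2) / 12 := by
    rw [lam5, abs_of_nonpos (by nlinarith [mul_nonneg h0 h1p])]; ring
  have ha6 : |lam6 μ| = μ ^ 2 / 6 := by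
    rw [lam6, abs_of_nonneg (by positivity)]
  have h5lt1 : |lam5 μ| < lam1 μ := by
    rw [ha5, lam1]; nlinarith [hg0, hs1]
  have h2le5 : |lam2 μ| ≤ |lam5 μ| := by
    rw [ha2, ha5, lam2]; nlinarith [hsg]
  have h3le5 : |lam3 μ| ≤ |lam5 μ| := by
    rw [ha3, ha5]; nlinarith [mul_nonneg h0 (sq_nonneg (1 - μ))]
  have h4le5 : |lam4 μ| ≤ |lam5 μ| := by
    rw [ha4, ha5]; nlinarith [mul_nonneg h0 h1p]
  have h6le5 : |lam6 μ| ≤ |lam5 μ| := by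
    rw [ha6, ha5]
    nlinarith [mul_nonneg h0 (by nlinarith : (0:ℝ) ≤ 5 - 2*μ),
      mul_nonneg (mul_nonneg h0 h0) h0]
  refine ⟨by rw [lam1]; nlinarith [hs1, sq_nonneg μ, sq_nonneg (μ^2)],
    lt_of_le_of_lt h2le5 h5lt1, lt_of_le_of_lt h3le5 h5lt1, lt_of_le_of_lt h4le5 h5lt1,
    h5lt1, lt_of_le_of_lt h6le5 h5lt1, h2le5, h3le5, h4le5, h6le5⟩
end
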